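/- For the MEDR problem, the critical payment of any winning agent i is at most α·γ·s_i: if agent i bids cost b_i > α·γ·s_i (others fixed), then removing i from any solution containing i and covering the shortfall γ·s_i with backup storage strictly decreases the objective, so i cannot win under an exact optimal allocation. Hence binary search for the critical value over [b_i, α·γ·s_i] is correct. -/

import Mathlib

/-!
Dropping a winner `i` from a selection saves its bid `b_i` and lowers the supplied storage by
`γ s_i`, which raises the backup shortfall `max (W - γ ∑ s) 0` by at most `γ s_i`, so the cost
rises by at most `α γ s_i - b_i`. When `b_i > α γ s_i` this is negative, so `i` never passes the
strict tie-breaking test a winner must pass.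
-/

open Finset

lemma max_add_zero_le {x d : ℝ} (hd : 0 ≤ d) : max (x + d) 0 ≤ max x 0 + d :=
  max_le (by linarith [le_max_left x 0]) (by linarith [le_max_right x 0])

/-- `(B j).1` is agent `j`'s storage `s_j` and `(B j).2` its bid `b_j`. -/
def medrCost {ι : Type*} (α γ W : ℝ) (B : ι → ℝ × ℝ) (S : Finset ι) : ℝ :=
  ∑ j ∈ S, (B j).2 + α * max (W - γ * ∑ j ∈ S, (B j).1) 0

lemma medrCost_erase_le {ι : Type*} [DecidableEq ι] {α γ W : ℝ} (hα : 0 ≤ α) (hγ : 0 ≤ γ)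
    {B : ι → ℝ × ℝ} {S : Finset ι} {i : ι} (hi : i ∈ S) (hs : 0 ≤ (B i).1) :
    medrCost α γ W B (S.erase i) ≤ medrCost α γ W B S - (B i).2 + α * γ * (B i).1 := by
  have hshortfall : max (W - γ * ∑ j ∈ S.erase i, (B j).1) 0
      ≤ max (W - γ * ∑ j ∈ S, (B j).1) 0 + γ * (B i).1 := by
    rw [← sum_erase_add _ _ hi]
    convert max_add_zero_le (x := W - γ * (∑ j ∈ S.erase i, (B j).1 + (B i).1))
      (mul_nonneg hγ hs) using 2
    ring
  have hbids : ∑ j ∈ S, (B j).2 = ∑ j ∈ S.erase i, (B j).2 + (B i).2 :=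
    (sum_erase_add _ _ hi).symm
  unfold medrCost
  linarith [mul_le_mul_of_nonneg_left hshortfall hα]

theorem stmt_13_general (n : ℕ) (α γ W : ℝ) (hα : 0 < α) (hγ : 0 < γ)
    (cost : (Fin n → ℝ × ℝ) → Finset (Fin n) → ℝ)
    (hcost : ∀ B S, cost B S =
      ∑ i ∈ S, (B i).2 + α * max (W - γ * ∑ i ∈ S, (B i).1) 0)
    (Alg : (Fin n → ℝ × ℝ) → Finset (Fin n))
    (htie : ∀ (B : Fin n → ℝ × ℝ) (i : Fin n), i ∈ Alg B →
      cost B (Alg B) < cost B ((Alg B).erase i))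
    (B : Fin n → ℝ × ℝ) (hB : ∀ j, 0 ≤ (B j).1 ∧ 0 ≤ (B j).2) (i : Fin n)
    (hbig : α * γ * (B i).1 < (B i).2) :
    i ∉ Alg B := by
  intro hi
  have hwin := htie B i hi
  have hdrop := medrCost_erase_le (W := W) hα.le hγ.le hi (hB i).1
  rw [hcost, hcost] at hwin
  unfold medrCost at hdrop
  linarith

/-- Upper bound on the critical payment in MEDR: under an exact optimal allocation with
ties broken against higher-cost agents (a winner must strictly improve the objective over
dropping it), an agent bidding cost `b_i > α·γ·s_i` cannot win. -/
theorem stmt_13 (n : ℕ) (α γ W : ℝ) (hα : 0 < α) (hγ : 0 < γ)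
    (cost : (Fin n → ℝ × ℝ) → Finset (Fin n) → ℝ)
    (hcost : ∀ B S, cost B S =
      ∑ i ∈ S, (B i).2 + α * max (W - γ * ∑ i ∈ S, (B i).1) 0)
    (Alg : (Fin n → ℝ × ℝ) → Finset (Fin n))
    (hopt : ∀ B S, cost B (Alg B) ≤ cost B S)
    (htie : ∀ (B : Fin n → ℝ × ℝ) (i : Fin n), i ∈ Alg B →
      cost B (Alg B) < cost B ((Alg B).erase i))
    (B : Fin n → ℝ × ℝ) (hB : ∀ j, 0 ≤ (B j).1 ∧ 0 ≤ (B j).2) (i : Fin n)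
    (hbig : α * γ * (B i).1 < (B i).2) :
    i ∉ Alg B :=
  stmt_13_general n α γ W hα hγ cost hcost Alg htie B hB i hbig
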